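/- Let G be a countable group and let (S, 0) be a pointed metrizable topological space. If G admits a group homomorphism with nontrivial image into the group Homeo̰₊^{(S,0)}(ℝ, 0), then G admits a group homomorphism with nontrivial image into Homeo₊(ℝ). -/

import Mathlib

open Filter Topology Set

def HomeoPlusReal : Subgroup (Equiv.Perm ℝ) where
  carrier := {f | Continuous f ∧ Continuous f.symm ∧ StrictMono f}
  one_mem' := by
    refine ⟨continuous_id, ?_, fun a b h => h⟩
    exact continuous_id
  mul_mem' := by
    rintro a b ⟨ha1, ha2, ha3⟩ ⟨hb1, hb2, hb3⟩
    refine ⟨?_, ?_, ?_⟩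
    · simpa [Equiv.Perm.coe_mul] using ha1.comp hb1
    · have : Continuous (⇑b.symm ∘ ⇑a.symm) := hb2.comp ha2
      simpa [Equiv.Perm.mul_def, Equiv.symm_trans_apply, Function.comp] using this
    · intro x y h
      simpa [Equiv.Perm.coe_mul] using ha3 (hb3 h)
  inv_mem' := by
    rintro a ⟨ha1, ha2, ha3⟩
    refine ⟨by simpa using ha2, by simpa [Equiv.Perm.inv_def] using ha1, ?_⟩
    intro x y h
    have h2 := ha3.lt_iff_lt (a := a.symm x) (b := a.symm y)
    simp only [Equiv.apply_symm_apply] at h2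
    simpa using h2.mp h

variable (S : Type*) [TopologicalSpace S] (s₀ : S)

/-- Data representing a local homeomorphism `F` of an open neighborhood of
`(0, s₀)` in `ℝ × S` of the form `F (x, s) = (h_s x, s)`, where each `h_s` is a
local orientation-preserving (strictly increasing) homeomorphism of `ℝ`, with
`F (0, s₀) = (0, s₀)`, together with a local inverse `G`. -/
structure ParamLocalHomeo where
  F : ℝ × S → ℝ × S
  G : ℝ × S → ℝ × S
  U : Set (ℝ × S)
  V : Set (ℝ × S)
  isOpen_U : IsOpen U
  isOpen_V : IsOpen V
  mem_U : ((0 : ℝ), s₀) ∈ U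
  mem_V : ((0 : ℝ), s₀) ∈ V
  contF : ContinuousOn F U
  contG : ContinuousOn G V
  mapsF : Set.MapsTo F U V
  mapsG : Set.MapsTo G V U
  leftInv : ∀ p ∈ U, G (F p) = p
  rightInv : ∀ p ∈ V, F (G p) = p
  snd_eq : ∀ p ∈ U, (F p).2 = p.2
  mono : ∀ p ∈ U, ∀ q ∈ U, p.2 = q.2 → p.1 < q.1 → (F p).1 < (F q).1
  fixes : F ((0 : ℝ), s₀) = ((0 : ℝ), s₀)

namespace ParamLocalHomeo

variable {S s₀}

instance setoid : Setoid (ParamLocalHomeo S s₀) where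
  r d e := d.F =ᶠ[nhds ((0 : ℝ), s₀)] e.F
  iseqv := ⟨fun _ => Filter.EventuallyEq.refl _ _,
    fun h => h.symm, fun h h' => h.trans h'⟩

lemma G_fixes (d : ParamLocalHomeo S s₀) : d.G ((0 : ℝ), s₀) = ((0 : ℝ), s₀) := by
  have h := d.leftInv _ d.mem_U
  rw [d.fixes] at h
  exact h

lemma G_snd_eq (d : ParamLocalHomeo S s₀) : ∀ p ∈ d.V, (d.G p).2 = p.2 := by
  intro p hp
  have h := d.snd_eq (d.G p) (d.mapsG hp)
  rw [d.rightInv p hp] at h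
  exact h.symm

def one : ParamLocalHomeo S s₀ where
  F := id
  G := id
  U := Set.univ
  V := Set.univ
  isOpen_U := isOpen_univ
  isOpen_V := isOpen_univ
  mem_U := trivial
  mem_V := trivial
  contF := continuousOn_id
  contG := continuousOn_id
  mapsF := fun _ _ => trivial
  mapsG := fun _ _ => trivial
  leftInv := fun _ _ => rfl
  rightInv := fun _ _ => rfl
  snd_eq := fun _ _ => rfl
  mono := fun _ _ _ _ _ h => h
  fixes := rfl

def comp (d e : ParamLocalHomeo S s₀) : ParamLocalHomeo S s₀ where
  F := d.F ∘ e.F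
  G := e.G ∘ d.G
  U := e.U ∩ e.F ⁻¹' d.U
  V := d.V ∩ d.G ⁻¹' e.V
  isOpen_U := e.contF.isOpen_inter_preimage e.isOpen_U d.isOpen_U
  isOpen_V := d.contG.isOpen_inter_preimage d.isOpen_V e.isOpen_V
  mem_U := ⟨e.mem_U, by simp only [Set.mem_preimage, e.fixes]; exact d.mem_U⟩
  mem_V := ⟨d.mem_V, by simp only [Set.mem_preimage, d.G_fixes]; exact e.mem_V⟩
  contF := d.contF.comp (e.contF.mono Set.inter_subset_left) (fun x hx => hx.2)
  contG := e.contG.comp (d.contG.mono Set.inter_subset_left) (fun x hx => hx.2)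
  mapsF := by
    rintro p ⟨hp1, hp2⟩
    refine ⟨d.mapsF hp2, ?_⟩
    simp only [Set.mem_preimage, Function.comp_apply]
    rw [d.leftInv _ hp2]
    exact e.mapsF hp1
  mapsG := by
    rintro q ⟨hq1, hq2⟩
    refine ⟨e.mapsG hq2, ?_⟩
    simp only [Set.mem_preimage, Function.comp_apply]
    rw [e.rightInv _ hq2]
    exact d.mapsG hq1
  leftInv := by
    rintro p ⟨hp1, hp2⟩
    simp only [Function.comp_apply]
    rw [d.leftInv _ hp2, e.leftInv _ hp1]
  rightInv := by
    rintro q ⟨hq1, hq2⟩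
    simp only [Function.comp_apply]
    rw [e.rightInv _ hq2, d.rightInv _ hq1]
  snd_eq := by
    rintro p ⟨hp1, hp2⟩
    simp only [Function.comp_apply]
    rw [d.snd_eq _ hp2, e.snd_eq _ hp1]
  mono := by
    rintro p ⟨hp1, hp2⟩ q ⟨hq1, hq2⟩ hpq hlt
    refine d.mono _ hp2 _ hq2 ?_ (e.mono _ hp1 _ hq1 hpq hlt)
    rw [e.snd_eq _ hp1, e.snd_eq _ hq1, hpq]
  fixes := by simp only [Function.comp_apply, e.fixes, d.fixes]

def inv (d : ParamLocalHomeo S s₀) : ParamLocalHomeo S s₀ where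
  F := d.G
  G := d.F
  U := d.V
  V := d.U
  isOpen_U := d.isOpen_V
  isOpen_V := d.isOpen_U
  mem_U := d.mem_V
  mem_V := d.mem_U
  contF := d.contG
  contG := d.contF
  mapsF := d.mapsG
  mapsG := d.mapsF
  leftInv := d.rightInv
  rightInv := d.leftInv
  snd_eq := d.G_snd_eq
  mono := by
    intro p hp q hq hpq hlt
    have hGp := d.mapsG hp
    have hGq := d.mapsG hq
    have hsnd : (d.G p).2 = (d.G q).2 := by
      rw [d.G_snd_eq p hp, d.G_snd_eq q hq, hpq]
    rcases lt_trichotomy (d.G p).1 (d.G q).1 with h | h | h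
    · exact h
    · exfalso
      have : d.G p = d.G q := Prod.ext h hsnd
      have : p = q := by rw [← d.rightInv p hp, ← d.rightInv q hq, this]
      exact absurd (congrArg Prod.fst this) (ne_of_lt hlt)
    · exfalso
      have := d.mono _ hGq _ hGp hsnd.symm h
      rw [d.rightInv p hp, d.rightInv q hq] at this
      exact absurd hlt (not_lt.mpr this.le)
  fixes := d.G_fixes

lemma comp_sound {d₁ e₁ d₂ e₂ : ParamLocalHomeo S s₀} (h₁ : d₁ ≈ e₁) (h₂ : d₂ ≈ e₂) :
    comp d₁ d₂ ≈ comp e₁ e₂ := by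
  have hc : ContinuousAt d₂.F ((0 : ℝ), s₀) :=
    d₂.contF.continuousAt (d₂.isOpen_U.mem_nhds d₂.mem_U)
  have ht : Tendsto d₂.F (nhds ((0 : ℝ), s₀)) (nhds ((0 : ℝ), s₀)) := by
    have := hc.tendsto
    rwa [d₂.fixes] at this
  exact (h₁.comp_tendsto ht).trans (h₂.fun_comp e₁.F)

lemma inv_sound {d e : ParamLocalHomeo S s₀} (h : d ≈ e) : inv d ≈ inv e := by
  obtain ⟨s, hs, hseq⟩ := Filter.eventuallyEq_iff_exists_mem.mp h
  obtain ⟨W, hWs, hWopen, hW0⟩ := mem_nhds_iff.mp hs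
  set A : Set (ℝ × S) := d.U ∩ e.U ∩ W with hA
  have hAopen : IsOpen A := (d.isOpen_U.inter e.isOpen_U).inter hWopen
  have hA0 : ((0 : ℝ), s₀) ∈ A := ⟨⟨d.mem_U, e.mem_U⟩, hW0⟩
  have hBopen : IsOpen (d.V ∩ d.G ⁻¹' A) := d.contG.isOpen_inter_preimage d.isOpen_V hAopen
  have hB0 : ((0 : ℝ), s₀) ∈ d.V ∩ d.G ⁻¹' A :=
    ⟨d.mem_V, by simp only [Set.mem_preimage, d.G_fixes]; exact hA0⟩
  apply Filter.eventuallyEq_of_mem (hBopen.mem_nhds hB0)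
  rintro q ⟨hq1, hq2⟩
  simp only [Set.mem_preimage] at hq2
  obtain ⟨⟨hxU, hxU'⟩, hxW⟩ := hq2
  show d.G q = e.G q
  have h1 : d.F (d.G q) = q := d.rightInv q hq1
  have h2 : e.F (d.G q) = q := by rw [← hseq (hWs hxW)]; exact h1
  calc d.G q = e.G (e.F (d.G q)) := (e.leftInv _ hxU').symm
    _ = e.G q := by rw [h2]

end ParamLocalHomeo

/-- The group `Homeo̰₊^{(S,s₀)}(ℝ, 0)` of germs at `(0, s₀)` of local
homeomorphisms of `ℝ × S` of the form `(x, s) ↦ (h_s x, s)`, fixing `(0, s₀)`,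
under composition of germs. -/
def ParamGermHomeoPlus : Type _ := Quotient (ParamLocalHomeo.setoid (S := S) (s₀ := s₀))

namespace ParamGermHomeoPlus

instance : Group (ParamGermHomeoPlus S s₀) where
  mul := Quotient.map₂ ParamLocalHomeo.comp
    (fun _ _ h₁ _ _ h₂ => ParamLocalHomeo.comp_sound h₁ h₂)
  one := ⟦ParamLocalHomeo.one⟧
  inv := Quotient.map ParamLocalHomeo.inv (fun _ _ h => ParamLocalHomeo.inv_sound h)
  mul_assoc a b c := by
    induction a using Quotient.ind
    induction b using Quotient.ind
    induction c using Quotient.ind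
    exact Quotient.sound (Filter.EventuallyEq.refl _ _)
  one_mul a := by
    induction a using Quotient.ind
    exact Quotient.sound (Filter.EventuallyEq.refl _ _)
  mul_one a := by
    induction a using Quotient.ind
    exact Quotient.sound (Filter.EventuallyEq.refl _ _)
  inv_mul_cancel a := by
    induction a using Quotient.ind
    rename_i d
    apply Quotient.sound
    apply Filter.eventuallyEq_of_mem (d.isOpen_U.mem_nhds d.mem_U)
    intro p hp
    exact d.leftInv p hp

end ParamGermHomeoPlus

/-!
Choose an ultrafilter `U` on `ℝ × S`, finer than the neighbourhood filter of `(0, s₀)`, that lives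
on the points moved by a representative of `φ g`. Taking first coordinates along `U` sends every
germ to an element of the ultrapower `ℝ^U`, a linear order, and since the germs are increasing on
fibres, `ι f := [(φ f)₁]_U` is left-invariant: `ι g ≤ ι h → ι (f * g) ≤ ι (f * h)`. So `G` acts by
order automorphisms on the countable orbit `ι '' G`, and nontrivially because `ι g ≠ ι 1`.
Replacing each point of the orbit by a copy of `ℚ` gives a countable dense linear order without
endpoints, hence a copy of `ℚ` (Cantor), and automorphisms of `ℚ` extend to increasing
homeomorphisms of `ℝ`.
-/

section LeftOrderInvariant

variable {G β : Type*} [Group G] [LinearOrder β] {ι : G → β}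

def IsLeftOrderInvariant (ι : G → β) : Prop :=
  ∀ f g h : G, ι g ≤ ι h → ι (f * g) ≤ ι (f * h)

lemma IsLeftOrderInvariant.mul_le_mul_iff (hι : IsLeftOrderInvariant ι) (f g h : G) :
    ι (f * g) ≤ ι (f * h) ↔ ι g ≤ ι h :=
  ⟨fun hle => by simpa using hι f⁻¹ _ _ hle, hι f g h⟩

lemma IsLeftOrderInvariant.mul_eq_mul (hι : IsLeftOrderInvariant ι) (f : G) {g h : G}
    (he : ι g = ι h) : ι (f * g) = ι (f * h) :=
  le_antisymm (hι f g h he.le) (hι f h g he.ge)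

noncomputable def rangeMap (ι : G → β) (f : G) (x : Set.range ι) : Set.range ι :=
  ⟨ι (f * x.2.choose), Set.mem_range_self _⟩

lemma rangeMap_mk (hι : IsLeftOrderInvariant ι) (f g : G) :
    rangeMap ι f ⟨ι g, Set.mem_range_self g⟩ = ⟨ι (f * g), Set.mem_range_self _⟩ :=
  Subtype.ext (hι.mul_eq_mul f (Set.mem_range_self g).choose_spec)

lemma rangeMap_mul (hι : IsLeftOrderInvariant ι) (f f' : G) (x : Set.range ι) :
    rangeMap ι (f * f') x = rangeMap ι f (rangeMap ι f' x) := by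
  obtain ⟨_, g, rfl⟩ := x
  simp only [rangeMap_mk hι, mul_assoc]

lemma rangeMap_one (hι : IsLeftOrderInvariant ι) (x : Set.range ι) :
    rangeMap ι 1 x = x := by
  obtain ⟨_, g, rfl⟩ := x
  simp only [rangeMap_mk hι, one_mul]

noncomputable def IsLeftOrderInvariant.rangeAction (hι : IsLeftOrderInvariant ι) :
    G →* (Set.range ι ≃o Set.range ι) where
  toFun f :=
    { toFun := rangeMap ι f
      invFun := rangeMap ι f⁻¹
      left_inv x := by rw [← rangeMap_mul hι, inv_mul_cancel, rangeMap_one hι]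
      right_inv x := by rw [← rangeMap_mul hι, mul_inv_cancel, rangeMap_one hι]
      map_rel_iff' := by
        rintro ⟨_, g, rfl⟩ ⟨_, h, rfl⟩
        simp only [Equiv.coe_fn_mk, rangeMap_mk hι, Subtype.mk_le_mk]
        exact hι.mul_le_mul_iff f g h }
  map_one' := RelIso.ext (rangeMap_one hι)
  map_mul' f f' := RelIso.ext (rangeMap_mul hι f f')

lemma IsLeftOrderInvariant.rangeAction_apply_mk (hι : IsLeftOrderInvariant ι) (f g : G) :
    hι.rangeAction f ⟨ι g, Set.mem_range_self g⟩ = ⟨ι (f * g), Set.mem_range_self _⟩ :=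
  rangeMap_mk hι f g

lemma IsLeftOrderInvariant.rangeAction_ne_one (hι : IsLeftOrderInvariant ι) {g : G}
    (hg : ι g ≠ ι 1) : hι.rangeAction g ≠ 1 := fun h => hg <| by
  simpa [hι.rangeAction_apply_mk] using
    congrArg Subtype.val (DFunLike.congr_fun h ⟨ι 1, Set.mem_range_self 1⟩)

end LeftOrderInvariant

namespace OrderIso

def toPermHom (α : Type*) [LE α] : (α ≃o α) →* Equiv.Perm α where
  toFun := RelIso.toEquiv
  map_one' := rfl
  map_mul' _ _ := rfl

lemma toPermHom_injective (α : Type*) [LE α] : Function.Injective (toPermHom α) :=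
  RelIso.toEquiv_injective

def prodLexCongrLeftHom (α β : Type*) [Preorder α] [Preorder β] :
    (α ≃o α) →* (α ×ₗ β ≃o α ×ₗ β) where
  toFun e := Prod.Lex.prodLexCongr e (OrderIso.refl β)
  map_one' := rfl
  map_mul' _ _ := rfl

lemma prodLexCongrLeftHom_injective (α β : Type*) [Preorder α] [Preorder β] [Nonempty β] :
    Function.Injective (prodLexCongrLeftHom α β) := by
  intro e e' h
  ext a
  obtain ⟨b⟩ := ‹Nonempty β›
  exact congrArg (fun f => (ofLex (f (toLex (a, b)))).1) h

def autCongr {α β : Type*} [Preorder α] [Preorder β] (c : α ≃o β) :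
    (α ≃o α) ≃* (β ≃o β) where
  toFun e := c.symm.trans (e.trans c)
  invFun e := c.trans (e.trans c.symm)
  left_inv e := by ext; simp
  right_inv e := by ext; simp
  map_mul' e e' := by ext; simp [RelIso.mul_apply]

noncomputable def ratExtendFun (f : ℚ ≃o ℚ) (x : ℝ) : ℝ :=
  sSup ((fun q : ℚ => (f q : ℝ)) '' {q : ℚ | (q : ℝ) < x})

variable (f g : ℚ ≃o ℚ)

lemma bddAbove_image_ratCast_lt (x : ℝ) :
    BddAbove ((fun q : ℚ => (f q : ℝ)) '' {q : ℚ | (q : ℝ) < x}) := by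
  obtain ⟨r, hr⟩ := exists_rat_gt x
  refine ⟨f r, ?_⟩
  rintro _ ⟨q, hq, rfl⟩
  have hqr : q ≤ r := by exact_mod_cast (show (q : ℝ) < x from hq).trans hr |>.le
  exact Rat.cast_le.mpr (f.monotone hqr)

lemma nonempty_image_ratCast_lt (x : ℝ) :
    ((fun q : ℚ => (f q : ℝ)) '' {q : ℚ | (q : ℝ) < x}).Nonempty :=
  let ⟨q, hq⟩ := exists_rat_lt x; ⟨_, q, hq, rfl⟩

lemma ratExtendFun_ratCast (q : ℚ) : ratExtendFun f q = f q := by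
  refine le_antisymm (csSup_le (f.nonempty_image_ratCast_lt q) ?_) ?_
  · rintro _ ⟨r, hr, rfl⟩
    have hrq : r ≤ q := by exact_mod_cast (show (r : ℝ) < q from hr).le
    exact Rat.cast_le.mpr (f.monotone hrq)
  · refine le_of_forall_lt fun y hy => ?_
    obtain ⟨r, hyr, hr⟩ := exists_rat_btwn hy
    have hlt : f.symm r < q := by
      rw [← f.lt_iff_lt, f.apply_symm_apply]; exact_mod_cast hr
    calc y < r := hyr
      _ = f (f.symm r) := by rw [f.apply_symm_apply]
      _ ≤ ratExtendFun f q :=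
        le_csSup (f.bddAbove_image_ratCast_lt q) ⟨_, by exact_mod_cast hlt, rfl⟩

lemma ratExtendFun_monotone : Monotone (ratExtendFun f) := fun x y hxy =>
  csSup_le_csSup (f.bddAbove_image_ratCast_lt y) (f.nonempty_image_ratCast_lt x)
    (image_mono fun _ hq => lt_of_lt_of_le hq hxy)

lemma ratExtendFun_continuous : Continuous (ratExtendFun f) := by
  refine f.ratExtendFun_monotone.continuous_of_denseRange (Rat.denseRange_cast.mono ?_)
  rintro _ ⟨q, rfl⟩
  exact ⟨f.symm q, by rw [ratExtendFun_ratCast, apply_symm_apply]⟩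

lemma ratExtendFun_eq_of_ratCast {e : ℝ → ℝ} (he : Continuous e)
    (h : ∀ q : ℚ, e q = f q) : ratExtendFun f = e :=
  Continuous.ext_on Rat.denseRange_cast f.ratExtendFun_continuous he
    (by rintro _ ⟨q, rfl⟩; rw [ratExtendFun_ratCast, h])

lemma ratExtendFun_one : ratExtendFun 1 = id :=
  ratExtendFun_eq_of_ratCast 1 continuous_id fun _ => rfl

lemma ratExtendFun_mul : ratExtendFun (f * g) = ratExtendFun f ∘ ratExtendFun g :=
  ratExtendFun_eq_of_ratCast _ (f.ratExtendFun_continuous.comp g.ratExtendFun_continuous)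
    fun q => by simp [ratExtendFun_ratCast]

lemma ratExtendFun_inv_comp : ratExtendFun f⁻¹ ∘ ratExtendFun f = id := by
  rw [← ratExtendFun_mul, inv_mul_cancel, ratExtendFun_one]

noncomputable def ratExtend : (ℚ ≃o ℚ) →* (ℝ ≃o ℝ) where
  toFun f := Equiv.toOrderIso
    ⟨ratExtendFun f, ratExtendFun f⁻¹, congrFun f.ratExtendFun_inv_comp,
      fun x => by simpa using congrFun (f⁻¹).ratExtendFun_inv_comp x⟩
    f.ratExtendFun_monotone f⁻¹.ratExtendFun_monotone
  map_one' := ext ratExtendFun_one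
  map_mul' f g := ext (ratExtendFun_mul f g)

lemma ratExtend_injective : Function.Injective ratExtend := by
  intro f g h
  ext q
  have := congrArg (fun e : ℝ ≃o ℝ => e q) h
  simpa [ratExtend, ratExtendFun_ratCast] using this

end OrderIso

def toHomeoPlusReal : (ℝ ≃o ℝ) →* HomeoPlusReal :=
  (OrderIso.toPermHom ℝ).codRestrict HomeoPlusReal
    fun e => ⟨e.continuous, e.symm.continuous, e.strictMono⟩

lemma toHomeoPlusReal_injective : Function.Injective toHomeoPlusReal := fun _ _ h =>
  OrderIso.toPermHom_injective ℝ (congrArg Subtype.val h)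

theorem exists_injective_hom_orderIso_rat (α : Type*) [LinearOrder α] [Countable α]
    [Nonempty α] : ∃ Φ : (α ≃o α) →* (ℚ ≃o ℚ), Function.Injective Φ := by
  have : Countable (α ×ₗ ℚ) := Countable.of_equiv _ toLex
  obtain ⟨c⟩ := Order.iso_of_countable_dense (α ×ₗ ℚ) ℚ
  exact ⟨(OrderIso.autCongr c).toMonoidHom.comp (OrderIso.prodLexCongrLeftHom α ℚ),
    (OrderIso.autCongr c).injective.comp (OrderIso.prodLexCongrLeftHom_injective α ℚ)⟩

theorem exists_injective_hom_homeoPlusReal (α : Type*) [LinearOrder α] [Countable α]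
    [Nonempty α] : ∃ Φ : (α ≃o α) →* HomeoPlusReal, Function.Injective Φ := by
  obtain ⟨Φ, hΦ⟩ := exists_injective_hom_orderIso_rat α
  exact ⟨toHomeoPlusReal.comp (OrderIso.ratExtend.comp Φ),
    toHomeoPlusReal_injective.comp (OrderIso.ratExtend_injective.comp hΦ)⟩

namespace ParamLocalHomeo

variable {S : Type*} [TopologicalSpace S] {s₀ : S} (d : ParamLocalHomeo S s₀)

lemma eventually_mem_U : ∀ᶠ p in 𝓝 ((0 : ℝ), s₀), p ∈ d.U :=
  d.isOpen_U.mem_nhds d.mem_U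

lemma tendsto_F : Tendsto d.F (𝓝 ((0 : ℝ), s₀)) (𝓝 ((0 : ℝ), s₀)) := by
  simpa only [d.fixes] using (d.contF.continuousAt d.eventually_mem_U).tendsto

lemma fst_le_fst {p q : ℝ × S} (hp : p ∈ d.U) (hq : q ∈ d.U) (h₂ : p.2 = q.2)
    (h₁ : p.1 ≤ q.1) : (d.F p).1 ≤ (d.F q).1 := by
  rcases h₁.eq_or_lt with h | h
  · rw [Prod.ext h h₂]
  · exact (d.mono p hp q hq h₂ h).le

end ParamLocalHomeo

namespace ParamGermHomeoPlus

variable {S : Type*} [TopologicalSpace S] {s₀ : S} {l : Filter (ℝ × S)}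

def fstGermAlong (hl : l ≤ 𝓝 ((0 : ℝ), s₀)) : ParamGermHomeoPlus S s₀ → l.Germ ℝ :=
  Quotient.lift (fun d => ((fun p => (d.F p).1 : ℝ × S → ℝ) : l.Germ ℝ))
    fun _ _ h => Germ.coe_eq.2 ((h.filter_mono hl).fun_comp Prod.fst)

lemma fstGermAlong_mul_le_mul (hl : l ≤ 𝓝 ((0 : ℝ), s₀))
    (a b c : ParamGermHomeoPlus S s₀) (h : fstGermAlong hl b ≤ fstGermAlong hl c) :
    fstGermAlong hl (a * b) ≤ fstGermAlong hl (a * c) := by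
  induction a using Quotient.ind with | _ a
  induction b using Quotient.ind with | _ b
  induction c using Quotient.ind with | _ c
  refine Germ.coe_le.2 ?_
  filter_upwards [Germ.coe_le.1 h, hl b.eventually_mem_U, hl c.eventually_mem_U,
    hl (b.tendsto_F.eventually a.eventually_mem_U),
    hl (c.tendsto_F.eventually a.eventually_mem_U)] with p hle hb hc hab hac
  exact a.fst_le_fst hab hac (by rw [b.snd_eq p hb, c.snd_eq p hc]) hle

lemma exists_ultrafilter_fstGermAlong_ne_one {γ : ParamGermHomeoPlus S s₀} (hγ : γ ≠ 1) :
    ∃ (U : Ultrafilter (ℝ × S)) (hU : ↑U ≤ 𝓝 ((0 : ℝ), s₀)),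
      fstGermAlong hU γ ≠ fstGermAlong hU 1 := by
  induction γ using Quotient.ind with | _ d
  have hmoved : ∃ᶠ p in 𝓝 ((0 : ℝ), s₀), d.F p ≠ p := fun h =>
    hγ (Quotient.sound (h.mono fun _ => not_not.1))
  have : NeBot (𝓝 ((0 : ℝ), s₀) ⊓ 𝓟 {p | d.F p ≠ p}) := frequently_iff_neBot.1 hmoved
  let U := Ultrafilter.of (𝓝 ((0 : ℝ), s₀) ⊓ 𝓟 {p | d.F p ≠ p})
  have hU : (U : Filter (ℝ × S)) ≤ _ := Ultrafilter.of_le _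
  have hUnhds : (U : Filter (ℝ × S)) ≤ 𝓝 ((0 : ℝ), s₀) := hU.trans inf_le_left
  have hUmoved : ∀ᶠ p in (U : Filter (ℝ × S)), d.F p ≠ p :=
    hU.trans inf_le_right (mem_principal_self _)
  refine ⟨U, hUnhds, fun h => ?_⟩
  obtain ⟨p, hfst, hp, hne⟩ :=
    ((Germ.coe_eq.1 h).and ((d.eventually_mem_U.filter_mono hUnhds).and hUmoved)).exists
  exact hne (Prod.ext hfst (d.snd_eq p hp))

end ParamGermHomeoPlus

theorem exists_nontrivial_hom_homeoPlus_of_paramGerm_general {G : Type*} [Group G]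
    [Countable G] {S : Type*} [TopologicalSpace S]
    (s₀ : S)
    (h : ∃ φ : G →* ParamGermHomeoPlus S s₀, ∃ g : G, φ g ≠ 1) :
    ∃ ψ : G →* HomeoPlusReal, ∃ g : G, ψ g ≠ 1 := by
  open ParamGermHomeoPlus in
  obtain ⟨φ, g, hg⟩ := h
  obtain ⟨U, hU, hne⟩ := exists_ultrafilter_fstGermAlong_ne_one hg
  let ι : G → (U : Filter (ℝ × S)).Germ ℝ := fun f => fstGermAlong hU (φ f)
  have hι : IsLeftOrderInvariant ι := fun f g h hle => by
    simpa only [ι, map_mul] using fstGermAlong_mul_le_mul hU (φ f) _ _ hle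
  have : Nonempty (Set.range ι) := ⟨⟨ι 1, Set.mem_range_self 1⟩⟩
  have : Countable (Set.range ι) := (Set.countable_range ι).to_subtype
  obtain ⟨Φ, hΦ⟩ := exists_injective_hom_homeoPlusReal (Set.range ι)
  have hg' : ι g ≠ ι 1 := by simpa only [ι, map_one] using hne
  exact ⟨Φ.comp hι.rangeAction, g, (map_ne_one_iff Φ hΦ).2 (hι.rangeAction_ne_one hg')⟩

/-- If a countable group `G` admits a homomorphism with nontrivial image into
`Homeo̰₊^{(S,s₀)}(ℝ, 0)` for some pointed metrizable space `(S, s₀)`, then it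
admits a homomorphism with nontrivial image into `Homeo₊(ℝ)`. -/
theorem exists_nontrivial_hom_homeoPlus_of_paramGerm {G : Type*} [Group G]
    [Countable G] {S : Type*} [TopologicalSpace S]
    [TopologicalSpace.MetrizableSpace S] (s₀ : S)
    (h : ∃ φ : G →* ParamGermHomeoPlus S s₀, ∃ g : G, φ g ≠ 1) :
    ∃ ψ : G →* HomeoPlusReal, ∃ g : G, ψ g ≠ 1 :=
  exists_nontrivial_hom_homeoPlus_of_paramGerm_general s₀ h
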